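/- Let S ⊆ U be finite, let p ∈ U \ S, and let f ⊆ U. If f is a tile of QT(S ∪ {p}) but f is not a tile of QT(S), then every subset X ⊆ S ∪ {p} such that f is a tile of QT(X) must contain p; in other words, p belongs to every defining set of a newly created tile. -/

import Mathlib

/-- The unit square `U = [0,1) × [0,1)`. -/
def unitSq : Set (ℝ × ℝ) := Set.Ico (0 : ℝ) 1 ×ˢ Set.Ico (0 : ℝ) 1

/-- The square `[i/2^k, (i+1)/2^k) × [j/2^k, (j+1)/2^k)`. -/
def canSq (k : ℕ) (i j : ℤ) : Set (ℝ × ℝ) :=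
  Set.Ico ((i : ℝ) / 2 ^ k) (((i : ℝ) + 1) / 2 ^ k) ×ˢ
    Set.Ico ((j : ℝ) / 2 ^ k) (((j : ℝ) + 1) / 2 ^ k)

/-- `σ` is a canonical square of side length `2⁻ᵏ`: it has the form
`[i/2^k, (i+1)/2^k) × [j/2^k, (j+1)/2^k)` with `0 ≤ i, j < 2^k`
(so it is contained in the unit square). -/
def IsCanSqSide (k : ℕ) (σ : Set (ℝ × ℝ)) : Prop :=
  ∃ i j : ℤ, 0 ≤ i ∧ i < 2 ^ k ∧ 0 ≤ j ∧ j < 2 ^ k ∧ σ = canSq k i j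

/-- `σ` is a canonical square. -/
def IsCanSq (σ : Set (ℝ × ℝ)) : Prop := ∃ k : ℕ, IsCanSqSide k σ

/-- `q` is one of the four quadrants of the canonical square `σ`: if `σ` has side
length `2⁻ᵏ`, the quadrants are the canonical squares of side length `2⁻⁽ᵏ⁺¹⁾`
contained in `σ`. -/
def IsQuadrantOf (q σ : Set (ℝ × ℝ)) : Prop :=
  ∃ k : ℕ, IsCanSqSide k σ ∧ IsCanSqSide (k + 1) q ∧ q ⊆ σ

/-- `σ` is the smallest canonical square containing `S`: it is a canonical square,
it contains `S`, and it is contained in every canonical square containing `S`. -/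
def IsSmallestCanSq (S σ : Set (ℝ × ℝ)) : Prop :=
  IsCanSq σ ∧ S ⊆ σ ∧ ∀ τ : Set (ℝ × ℝ), IsCanSq τ → S ⊆ τ → σ ⊆ τ

open scoped Classical

/-- `smallestCanSq S`: the smallest canonical square containing `S` (junk value `∅` if none exists). -/
noncomputable def smallestCanSq (S : Set (ℝ × ℝ)) : Set (ℝ × ℝ) :=
  if h : ∃ σ : Set (ℝ × ℝ), IsSmallestCanSq S σ then h.choose else ∅

/-- A canonical square `σ` is critical for `P` if at least two of its four
quadrants contain a point of `P`. -/
def Critical (P σ : Set (ℝ × ℝ)) : Prop :=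
  IsCanSq σ ∧ ∃ q₁ q₂ : Set (ℝ × ℝ), IsQuadrantOf q₁ σ ∧ IsQuadrantOf q₂ σ ∧
    q₁ ≠ q₂ ∧ (P ∩ q₁).Nonempty ∧ (P ∩ q₂).Nonempty

/-- The tiles of the compressed quadtree map `QT(P)`: (i) `U` itself if `|P| ≤ 1`;
(ii) the annulus `U \ sq(P)` if `|P| ≥ 2` and `sq(P) ≠ U`; (iii) for every
canonical square `σ` critical for `P` and every quadrant `q` of `σ`: the square
`q` if `|P ∩ q| ≤ 1`, and the annulus `q \ sq(P ∩ q)` if `|P ∩ q| ≥ 2` and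
`sq(P ∩ q) ≠ q`. -/
noncomputable def QT (P : Set (ℝ × ℝ)) : Set (Set (ℝ × ℝ)) :=
  {f | (P.ncard ≤ 1 ∧ f = unitSq)
    ∨ (2 ≤ P.ncard ∧ smallestCanSq P ≠ unitSq ∧ f = unitSq \ smallestCanSq P)
    ∨ (∃ σ q : Set (ℝ × ℝ), Critical P σ ∧ IsQuadrantOf q σ ∧
        (((P ∩ q).ncard ≤ 1 ∧ f = q)
          ∨ (2 ≤ (P ∩ q).ncard ∧ smallestCanSq (P ∩ q) ≠ q ∧ f = q \ smallestCanSq (P ∩ q))))}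

/-!
Every tile of `QT(P)` has the form `c \ τ` with `c` a canonical square and `τ` either empty
or a canonical square strictly inside `c`. If `c` has side `2⁻ᵐ`, the area of `c \ τ` lies in
`(4⁻⁽ᵐ⁺¹⁾, 4⁻ᵐ]`, so the tile determines `m`, hence `c` and then `τ`. The tile belongs to
`QT(P)` exactly when `c` is `U` or a quadrant of a square critical for `P`, and `τ` is empty
if `|P ∩ c| ≤ 1` and `sq(P ∩ c)` otherwise. Criticality is monotone in `P`, and `sq(Y)` is
squeezed between `sq(X)` and `sq(Z)` for `X ⊆ Y ⊆ Z`; hence a tile of both `QT(X)` and `QT(Z)`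
is a tile of `QT(Y)`. Applied to `X ⊆ S ⊆ S ∪ {p}`, a tile of `QT(X)` with `p ∉ X` is already
a tile of `QT(S)`.
-/

open Set MeasureTheory

lemma floor_mul_two_pow_eq_iff {k : ℕ} {i : ℤ} {x : ℝ} :
    ⌊x * 2 ^ k⌋ = i ↔ x ∈ Ico ((i : ℝ) / 2 ^ k) (((i : ℝ) + 1) / 2 ^ k) := by
  rw [Int.floor_eq_iff, mem_Ico, div_le_iff₀ (by positivity), lt_div_iff₀ (by positivity)]

lemma mem_canSq_iff {k : ℕ} {i j : ℤ} {x : ℝ × ℝ} :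
    x ∈ canSq k i j ↔ ⌊x.1 * 2 ^ k⌋ = i ∧ ⌊x.2 * 2 ^ k⌋ = j := by
  simp only [canSq, mem_prod, floor_mul_two_pow_eq_iff]

lemma floor_mul_two_pow_eq_of_le {k n : ℕ} (hkn : k ≤ n) {x y : ℝ}
    (h : ⌊x * 2 ^ n⌋ = ⌊y * 2 ^ n⌋) : ⌊x * 2 ^ k⌋ = ⌊y * 2 ^ k⌋ := by
  have coarsen : ∀ z : ℝ, ⌊z * 2 ^ k⌋ = ⌊z * 2 ^ n⌋ / ((2 ^ (n - k) : ℕ) : ℤ) := by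
    intro z
    rw [← Int.floor_div_natCast, ← Nat.add_sub_cancel' hkn]
    push_cast
    rw [Nat.add_sub_cancel_left, pow_add]
    field_simp
  rw [coarsen x, coarsen y, h]

lemma exists_floor_mul_two_pow_bound {x y : ℝ} (hxy : x ≠ y) :
    ∃ N : ℕ, ∀ k : ℕ, ⌊x * 2 ^ k⌋ = ⌊y * 2 ^ k⌋ → k < N := by
  obtain ⟨N, hN⟩ := pow_unbounded_of_one_lt (1 / |x - y|) one_lt_two
  refine ⟨N, fun k hk => (pow_lt_pow_iff_right₀ one_lt_two).1 (lt_trans ?_ hN)⟩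
  have hclose := Int.abs_sub_lt_one_of_floor_eq_floor hk
  rw [← sub_mul, abs_mul, abs_pow, abs_two] at hclose
  rw [lt_div_iff₀ (abs_pos.2 (sub_ne_zero.2 hxy))]
  linarith

lemma isCanSqSide_zero_unitSq : IsCanSqSide 0 unitSq :=
  ⟨0, 0, le_rfl, by norm_num, le_rfl, by norm_num, by simp [unitSq, canSq]⟩

namespace IsCanSqSide

variable {k n : ℕ} {σ τ : Set (ℝ × ℝ)}

lemma floor_eq (h : IsCanSqSide k σ) {x y : ℝ × ℝ} (hx : x ∈ σ) (hy : y ∈ σ) :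
    ⌊x.1 * 2 ^ k⌋ = ⌊y.1 * 2 ^ k⌋ ∧ ⌊x.2 * 2 ^ k⌋ = ⌊y.2 * 2 ^ k⌋ := by
  obtain ⟨i, j, -, -, -, -, rfl⟩ := h
  rw [mem_canSq_iff] at hx hy
  exact ⟨hx.1.trans hy.1.symm, hx.2.trans hy.2.symm⟩

lemma nonempty (h : IsCanSqSide k σ) : σ.Nonempty := by
  obtain ⟨i, j, -, -, -, -, rfl⟩ := h
  refine ⟨((i : ℝ) / 2 ^ k, (j : ℝ) / 2 ^ k), mem_canSq_iff.2 ?_⟩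
  simp

lemma measurableSet (h : IsCanSqSide k σ) : MeasurableSet σ := by
  obtain ⟨i, j, -, -, -, -, rfl⟩ := h
  exact measurableSet_Ico.prod measurableSet_Ico

lemma volume_ne_top (h : IsCanSqSide k σ) : volume σ ≠ ⊤ := by
  obtain ⟨i, j, -, -, -, -, rfl⟩ := h
  rw [canSq, Measure.volume_eq_prod, Measure.prod_prod, Real.volume_Ico, Real.volume_Ico]
  exact ENNReal.mul_ne_top ENNReal.ofReal_ne_top ENNReal.ofReal_ne_top

lemma volume_real (h : IsCanSqSide k σ) : volume.real σ = (1 / 4) ^ k := by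
  obtain ⟨i, j, -, -, -, -, rfl⟩ := h
  have side : ∀ a : ℤ, max (((a : ℝ) + 1) / 2 ^ k - a / 2 ^ k) 0 = (1 / 2) ^ k := fun a => by
    rw [← sub_div, add_sub_cancel_left, one_div_pow, max_eq_left (by positivity)]
  rw [canSq, Measure.volume_eq_prod, measureReal_prod_prod, Real.volume_real_Ico,
    Real.volume_real_Ico, side, side, ← mul_pow]
  norm_num

lemma subset_of_inter (hσ : IsCanSqSide n σ) (hτ : IsCanSqSide k τ) (hkn : k ≤ n)
    (h : (σ ∩ τ).Nonempty) : σ ⊆ τ := by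
  obtain ⟨x, hxσ, hxτ⟩ := h
  obtain ⟨a, b, -, -, -, -, rfl⟩ := hτ
  intro y hy
  obtain ⟨h1, h2⟩ := hσ.floor_eq hy hxσ
  rw [mem_canSq_iff] at hxτ ⊢
  exact ⟨(floor_mul_two_pow_eq_of_le hkn h1).trans hxτ.1,
    (floor_mul_two_pow_eq_of_le hkn h2).trans hxτ.2⟩

lemma eq_of_inter (hσ : IsCanSqSide k σ) (hτ : IsCanSqSide k τ) (h : (σ ∩ τ).Nonempty) :
    σ = τ :=
  (hσ.subset_of_inter hτ le_rfl h).antisymm (hτ.subset_of_inter hσ le_rfl (inter_comm σ τ ▸ h))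

lemma le_of_subset (hσ : IsCanSqSide n σ) (hτ : IsCanSqSide k τ) (h : σ ⊆ τ) : k ≤ n := by
  have hvol := measureReal_mono (μ := volume) h hτ.volume_ne_top
  rw [hσ.volume_real, hτ.volume_real] at hvol
  exact (pow_le_pow_iff_right_of_lt_one₀ (by norm_num) (by norm_num)).1 hvol

lemma lt_of_ssubset (hσ : IsCanSqSide n σ) (hτ : IsCanSqSide k τ) (h : σ ⊂ τ) : k < n := by
  refine (hσ.le_of_subset hτ h.subset).lt_of_ne ?_
  rintro rfl
  obtain ⟨x, hx⟩ := hσ.nonempty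
  exact h.ne (hσ.eq_of_inter hτ ⟨x, hx, h.subset hx⟩)

end IsCanSqSide

lemma IsCanSq.nonempty {σ : Set (ℝ × ℝ)} (h : IsCanSq σ) : σ.Nonempty :=
  h.elim fun _ hk => hk.nonempty

lemma IsQuadrantOf.isCanSq {q σ : Set (ℝ × ℝ)} (h : IsQuadrantOf q σ) : IsCanSq q :=
  h.elim fun k hk => ⟨k + 1, hk.2.1⟩

lemma Critical.mono {X Y σ : Set (ℝ × ℝ)} (h : Critical X σ) (hXY : X ⊆ Y) : Critical Y σ := by
  obtain ⟨hσ, q₁, q₂, h₁, h₂, hne, hX₁, hX₂⟩ := h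
  exact ⟨hσ, q₁, q₂, h₁, h₂, hne, hX₁.mono (inter_subset_inter_left _ hXY),
    hX₂.mono (inter_subset_inter_left _ hXY)⟩

section SmallestCanSq

variable {P X Y Z σ τ : Set (ℝ × ℝ)}

lemma exists_level_bound {a b : ℝ × ℝ} (hab : a ≠ b) :
    ∃ N : ℕ, ∀ k σ, IsCanSqSide k σ → a ∈ σ → b ∈ σ → k < N := by
  rcases not_and_or.1 (mt Prod.ext_iff.2 hab) with h | h
  · obtain ⟨N, hN⟩ := exists_floor_mul_two_pow_bound h
    exact ⟨N, fun k σ hσ ha hb => hN k (hσ.floor_eq ha hb).1⟩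
  · obtain ⟨N, hN⟩ := exists_floor_mul_two_pow_bound h
    exact ⟨N, fun k σ hσ ha hb => hN k (hσ.floor_eq ha hb).2⟩

/-- The finest level carrying a canonical square that contains `P` is the level of `sq(P)`. -/
lemma exists_isSmallestCanSq (hPU : P ⊆ unitSq) {a b : ℝ × ℝ} (ha : a ∈ P) (hb : b ∈ P)
    (hab : a ≠ b) : ∃ σ, IsSmallestCanSq P σ := by
  obtain ⟨N, hN⟩ := exists_level_bound hab
  let Q (k : ℕ) : Prop := ∃ σ, IsCanSqSide k σ ∧ P ⊆ σ
  obtain ⟨σ, hσ, hPσ⟩ : Q (Nat.findGreatest Q N) :=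
    Nat.findGreatest_spec (Nat.zero_le N) ⟨unitSq, isCanSqSide_zero_unitSq, hPU⟩
  refine ⟨σ, ⟨_, hσ⟩, hPσ, fun τ ⟨m, hτ⟩ hPτ => hσ.subset_of_inter hτ ?_ ⟨a, hPσ ha, hPτ ha⟩⟩
  exact Nat.le_findGreatest (hN m τ hτ (hPτ ha) (hPτ hb)).le ⟨τ, hτ, hPτ⟩

lemma IsSmallestCanSq.eq (hσ : IsSmallestCanSq P σ) (hτ : IsSmallestCanSq P τ) : σ = τ :=
  (hσ.2.2 τ hτ.1 hτ.2.1).antisymm (hτ.2.2 σ hσ.1 hσ.2.1)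

lemma smallestCanSq_eq (hσ : IsSmallestCanSq P σ) : smallestCanSq P = σ := by
  have hex : ∃ σ, IsSmallestCanSq P σ := ⟨σ, hσ⟩
  rw [smallestCanSq, dif_pos hex]
  exact hex.choose_spec.eq hσ

lemma isSmallestCanSq_smallestCanSq (hPU : P ⊆ unitSq) (hP : 2 ≤ P.ncard) :
    IsSmallestCanSq P (smallestCanSq P) := by
  obtain ⟨a, b, ha, hb, hab⟩ := (one_lt_ncard_iff (finite_of_ncard_pos (by omega))).1 hP
  obtain ⟨σ, hσ⟩ := exists_isSmallestCanSq hPU ha hb hab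
  rwa [smallestCanSq_eq hσ]

lemma IsSmallestCanSq.of_subset_of_subset (hX : IsSmallestCanSq X σ) (hZ : IsSmallestCanSq Z σ)
    (hXY : X ⊆ Y) (hYZ : Y ⊆ Z) : IsSmallestCanSq Y σ :=
  ⟨hX.1, hYZ.trans hZ.2.1, fun τ hτ hYτ => hX.2.2 τ hτ (hXY.trans hYτ)⟩

end SmallestCanSq

/-- The pair `(c, τ)` encodes the set `c \ τ`; `τ = ∅` gives the square `c` itself. -/
def IsCanAnnulus (c τ : Set (ℝ × ℝ)) : Prop :=
  IsCanSq c ∧ (τ = ∅ ∨ IsCanSq τ ∧ τ ⊂ c)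

def IsHole (P τ : Set (ℝ × ℝ)) : Prop :=
  (P.ncard ≤ 1 ∧ τ = ∅) ∨ (2 ≤ P.ncard ∧ IsSmallestCanSq P τ)

/-- `c \ τ` is a tile of `QT(P)`; for `c = U` the hole is that of `P ∩ U = P`. -/
def IsQTTile (P c τ : Set (ℝ × ℝ)) : Prop :=
  (c = unitSq ∨ ∃ σ, Critical P σ ∧ IsQuadrantOf c σ) ∧ IsHole (P ∩ c) τ

lemma eq_of_mem_Ioc_pow {r v : ℝ} (hr₀ : 0 ≤ r) (hr₁ : r ≤ 1) {m m' : ℕ}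
    (h : v ∈ Ioc (r ^ (m + 1)) (r ^ m)) (h' : v ∈ Ioc (r ^ (m' + 1)) (r ^ m')) : m = m' := by
  by_contra hne
  rcases Nat.lt_or_gt_of_ne hne with hlt | hlt
  · linarith [h'.2, h.1, pow_le_pow_of_le_one hr₀ hr₁ (show m + 1 ≤ m' from hlt)]
  · linarith [h.2, h'.1, pow_le_pow_of_le_one hr₀ hr₁ (show m' + 1 ≤ m from hlt)]

lemma volume_real_sdiff_mem_Ioc {m : ℕ} {c τ : Set (ℝ × ℝ)} (hc : IsCanSqSide m c)
    (hτ : τ = ∅ ∨ IsCanSq τ ∧ τ ⊂ c) :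
    volume.real (c \ τ) ∈ Ioc ((1 / 4 : ℝ) ^ (m + 1)) ((1 / 4) ^ m) := by
  have hquarter : (1 / 4 : ℝ) ^ (m + 1) = (1 / 4) ^ m / 4 := by rw [pow_succ]; ring
  have hpos : (0 : ℝ) < (1 / 4) ^ m := by positivity
  rcases hτ with rfl | ⟨⟨n, hτn⟩, hτc⟩
  · rw [sdiff_empty, hc.volume_real, hquarter]
    exact ⟨by linarith, le_rfl⟩
  · rw [measureReal_sdiff hτc.subset hτn.measurableSet hc.volume_ne_top, hc.volume_real,
      hτn.volume_real]
    have hfiner : (1 / 4 : ℝ) ^ n ≤ (1 / 4) ^ (m + 1) :=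
      pow_le_pow_of_le_one (by norm_num) (by norm_num) (hτn.lt_of_ssubset hc hτc)
    have hτpos : (0 : ℝ) < (1 / 4) ^ n := by positivity
    constructor <;> linarith

namespace IsCanAnnulus

variable {c c' τ τ' : Set (ℝ × ℝ)}

lemma subset (h : IsCanAnnulus c τ) : τ ⊆ c := by
  rcases h.2 with rfl | ⟨-, hτc⟩
  exacts [empty_subset c, hτc.subset]

lemma ne (h : IsCanAnnulus c τ) : τ ≠ c := by
  rcases h.2 with rfl | ⟨-, hτc⟩
  exacts [h.1.nonempty.ne_empty.symm, hτc.ne]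

lemma eq_of_sdiff_eq (h : IsCanAnnulus c τ) (h' : IsCanAnnulus c' τ') (he : c \ τ = c' \ τ') :
    c = c' ∧ τ = τ' := by
  obtain ⟨m, hm⟩ := h.1
  obtain ⟨m', hm'⟩ := h'.1
  have hvol := volume_real_sdiff_mem_Ioc hm h.2
  have hvol' := volume_real_sdiff_mem_Ioc hm' h'.2
  rw [← he] at hvol'
  obtain rfl := eq_of_mem_Ioc_pow (by norm_num) (by norm_num) hvol hvol'
  obtain ⟨x, hx⟩ := nonempty_of_measureReal_ne_zero (hvol.1.trans' (by positivity)).ne'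
  obtain rfl := hm.eq_of_inter hm' ⟨x, hx.1, (he ▸ hx).1⟩
  refine ⟨rfl, ?_⟩
  rw [← sdiff_sdiff_cancel_left h.subset, he, sdiff_sdiff_cancel_left h'.subset]

end IsCanAnnulus

section Tiles

variable {P X Y Z c τ : Set (ℝ × ℝ)}

lemma isCanAnnulus_smallestCanSq (hPU : P ⊆ unitSq) (hP : 2 ≤ P.ncard) (hc : IsCanSq c)
    (hPc : P ⊆ c) (hne : smallestCanSq P ≠ c) : IsCanAnnulus c (smallestCanSq P) :=
  have hsq := isSmallestCanSq_smallestCanSq hPU hP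
  ⟨hc, Or.inr ⟨hsq.1, ssubset_of_ne_of_subset hne (hsq.2.2 c hc hPc)⟩⟩

lemma exists_isQTTile_of_mem_QT (hPU : P ⊆ unitSq) {f : Set (ℝ × ℝ)} (hf : f ∈ QT P) :
    ∃ c τ, IsCanAnnulus c τ ∧ IsQTTile P c τ ∧ f = c \ τ := by
  have hU : IsCanSq unitSq := ⟨0, isCanSqSide_zero_unitSq⟩
  have hPU' : P ∩ unitSq = P := inter_eq_left.2 hPU
  rcases hf with ⟨hP, rfl⟩ | ⟨hP, hne, rfl⟩ | ⟨σ, q, hσ, hq, ⟨hP, hfq⟩ | ⟨hP, hne, rfl⟩⟩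
  · refine ⟨unitSq, ∅, ⟨hU, Or.inl rfl⟩, ⟨Or.inl rfl, ?_⟩, sdiff_empty.symm⟩
    rw [hPU']
    exact Or.inl ⟨hP, rfl⟩
  · refine ⟨unitSq, _, isCanAnnulus_smallestCanSq hPU hP hU hPU hne, ⟨Or.inl rfl, ?_⟩, rfl⟩
    rw [hPU']
    exact Or.inr ⟨hP, isSmallestCanSq_smallestCanSq hPU hP⟩
  · exact ⟨q, ∅, ⟨hq.isCanSq, Or.inl rfl⟩, ⟨Or.inr ⟨σ, hσ, hq⟩, Or.inl ⟨hP, rfl⟩⟩,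
      hfq.trans sdiff_empty.symm⟩
  · have hPqU : P ∩ q ⊆ unitSq := inter_subset_left.trans hPU
    exact ⟨q, _, isCanAnnulus_smallestCanSq hPqU hP hq.isCanSq inter_subset_right hne,
      ⟨Or.inr ⟨σ, hσ, hq⟩, Or.inr ⟨hP, isSmallestCanSq_smallestCanSq hPqU hP⟩⟩, rfl⟩

lemma IsQTTile.sdiff_mem_QT (hPU : P ⊆ unitSq) (h : IsQTTile P c τ) (hτc : τ ≠ c) :
    c \ τ ∈ QT P := by
  obtain ⟨rfl | ⟨σ, hσ, hcσ⟩, hole⟩ := h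
  · rw [inter_eq_left.2 hPU] at hole
    rcases hole with ⟨hP, rfl⟩ | ⟨hP, hτ⟩
    · exact Or.inl ⟨hP, sdiff_empty⟩
    · exact Or.inr (Or.inl ⟨hP, smallestCanSq_eq hτ ▸ hτc, by rw [smallestCanSq_eq hτ]⟩)
  · refine Or.inr (Or.inr ⟨σ, c, hσ, hcσ, ?_⟩)
    rcases hole with ⟨hP, rfl⟩ | ⟨hP, hτ⟩
    · exact Or.inl ⟨hP, sdiff_empty⟩
    · exact Or.inr ⟨hP, smallestCanSq_eq hτ ▸ hτc, by rw [smallestCanSq_eq hτ]⟩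

lemma IsHole.of_subset_of_subset (hZfin : Z.Finite) (hX : IsHole X τ) (hZ : IsHole Z τ)
    (hXY : X ⊆ Y) (hYZ : Y ⊆ Z) : IsHole Y τ := by
  rcases hX with ⟨-, rfl⟩ | ⟨hX, hXτ⟩ <;> rcases hZ with ⟨hZ, hZτ⟩ | ⟨-, hZτ⟩
  · exact Or.inl ⟨(ncard_le_ncard hYZ hZfin).trans hZ, rfl⟩
  · exact absurd hZτ.1.nonempty not_nonempty_empty
  · exact absurd hZτ hXτ.1.nonempty.ne_empty
  · exact Or.inr ⟨hX.trans (ncard_le_ncard hXY (hZfin.subset hYZ)),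
      hXτ.of_subset_of_subset hZτ hXY hYZ⟩

lemma IsQTTile.of_subset_of_subset (hZfin : Z.Finite) (hX : IsQTTile X c τ)
    (hZ : IsQTTile Z c τ) (hXY : X ⊆ Y) (hYZ : Y ⊆ Z) : IsQTTile Y c τ :=
  ⟨hX.1.imp_right fun ⟨σ, hσ, hcσ⟩ => ⟨σ, hσ.mono hXY, hcσ⟩,
    hX.2.of_subset_of_subset (hZfin.inter_of_left c) hZ.2 (inter_subset_inter_left c hXY)
      (inter_subset_inter_left c hYZ)⟩

lemma mem_QT_of_subset_of_subset {f : Set (ℝ × ℝ)} (hZU : Z ⊆ unitSq) (hZfin : Z.Finite)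
    (hXY : X ⊆ Y) (hYZ : Y ⊆ Z) (hX : f ∈ QT X) (hZ : f ∈ QT Z) : f ∈ QT Y := by
  obtain ⟨c, τ, hcτ, hXt, rfl⟩ := exists_isQTTile_of_mem_QT ((hXY.trans hYZ).trans hZU) hX
  obtain ⟨c', τ', hcτ', hZt, he⟩ := exists_isQTTile_of_mem_QT hZU hZ
  obtain ⟨rfl, rfl⟩ := hcτ.eq_of_sdiff_eq hcτ' he
  exact (hXt.of_subset_of_subset hZfin hZt hXY hYZ).sdiff_mem_QT (hYZ.trans hZU) hcτ.ne

end Tiles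

/-- A newly created tile has `p` in every defining set: if `f` is a tile of
`QT(S ∪ {p})` but not of `QT(S)`, then every `X ⊆ S ∪ {p}` with `f ∈ QT(X)`
contains `p`. -/
theorem mem_defining_set_of_new_tile (S : Set (ℝ × ℝ)) (hfin : S.Finite)
    (hSU : S ⊆ unitSq) (p : ℝ × ℝ) (hp : p ∈ unitSq \ S) (f : Set (ℝ × ℝ))
    (hf : f ∈ QT (S ∪ {p})) (hf' : f ∉ QT S) :
    ∀ X : Set (ℝ × ℝ), X ⊆ S ∪ {p} → f ∈ QT X → p ∈ X := by
  intro X hXSp hfX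
  by_contra hpX
  have hXS : X ⊆ S := fun x hx =>
    (hXSp hx).resolve_right fun hxp => hpX (mem_singleton_iff.1 hxp ▸ hx)
  exact hf' (mem_QT_of_subset_of_subset (union_subset hSU (singleton_subset_iff.2 hp.1))
    (hfin.union (finite_singleton p)) hXS subset_union_left hfX hf)
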